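/- Let P be the Petersen graph and G = ⟨(ab)⟩ ⊂ S₅ = Aut(P) the order-2 subgroup generated by a transposition. Then |Jac(P)| = 2000, |Jac(P//G)| = 100 with Jac(P//G) ≅ (ℤ/10ℤ)², and the kernel of the pushforward p_* : Jac(P) → Jac(P//G) has order 20. -/

import Mathlib

/-!
Each Jacobian is computed from a Smith normal form. Fixing the vertex `0`, the group of
degree-zero divisors modulo Laplacian images is `ℤ^V` modulo the image of the augmented matrix
`[e₀ | L]`: the extra column absorbs the degree, and since the columns of `L` sum to zero, an
element of degree zero lies in that image exactly when it lies in the image of `L`. Unimodular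
`U, V` with `U [e₀ | L] V` diagonal then identify the Jacobian with `∏ ℤ/dᵢ`, with invariant
factors `(1⁶, 2, 10³)` for `P` and `(1⁵, 10²)` for `P//G`. The pushforward satisfies
`p_* L_P = L_{P//G} p_*`, so it descends to Jacobians, and it is onto because `p` has a section;
hence `|Ker p_*| = 2000 / 100`.
-/

open Finset

/-- Connectivity of a multigraph presented by endpoint maps `s t : E → V`. -/
def GraphConnected {V E : Type*} (s t : E → V) : Prop :=
  ∀ u v : V, Relation.ReflTransGen
    (fun a b => ∃ e, (s e = a ∧ t e = b) ∨ (s e = b ∧ t e = a)) u v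

/-- Weighted (graph of groups) Laplacian matrix: the `(u,v)` entry is the coefficient
of `u` in `L(v)`, where firing `v` sends `c(v)/c(e)` chips along each edge `e` at `v`.
Loops contribute zero automatically. -/
def gogLap {V E : Type*} [Fintype E] [DecidableEq V]
    (s t : E → V) (cV : V → ℕ) (cE : E → ℕ) : Matrix V V ℤ :=
  Matrix.of fun u v => ∑ e : E, ((cV v / cE e : ℕ) : ℤ) *
    (((if s e = v then (1 : ℤ) else 0) - (if t e = v then 1 else 0)) *
     ((if s e = u then (1 : ℤ) else 0) - (if t e = u then 1 else 0)))

/-- Degree (sum of coefficients) of a divisor, as a linear map. -/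
def degHom (V : Type*) [Fintype V] : (V → ℤ) →ₗ[ℤ] ℤ where
  toFun d := ∑ v, d v
  map_add' x y := Finset.sum_add_distrib
  map_smul' c x := by simp [Finset.mul_sum]

/-- The Jacobian of the weighted graph: degree-zero divisors modulo the image of the
weighted Laplacian. -/
abbrev gogJac {V E : Type*} [Fintype V] [Fintype E] [DecidableEq V]
    (s t : E → V) (cV : V → ℕ) (cE : E → ℕ) :=
  LinearMap.ker (degHom V) ⧸
    Submodule.comap (LinearMap.ker (degHom V)).subtype
      (LinearMap.range (gogLap s t cV cE).mulVecLin)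

/-- A spanning tree of the multigraph, given as a set of edges: it connects all
vertices and has `|V| - 1` edges. -/
def IsSpanningTree {V E : Type*} [Fintype V] (s t : E → V) (F : Finset E) : Prop :=
  (∀ u v : V, Relation.ReflTransGen
      (fun a b => ∃ e ∈ F, (s e = a ∧ t e = b) ∨ (s e = b ∧ t e = a)) u v) ∧
  F.card + 1 = Fintype.card V

/-- Pushforward of divisors along a map of vertex sets: add up the chips in each fiber. -/
def pushV {V W : Type*} [Fintype V] [DecidableEq W] (p : V → W) (d : V → ℤ) : W → ℤ :=
  fun w => ∑ v ∈ Finset.univ.filter (fun v => p v = w), d v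

open Matrix

section SmithNormalForm

variable {R : Type*} [CommRing R] {m n : Type*} [Fintype n] [DecidableEq n]

lemma range_mulVecLin_mul_of_mul_eq_one (A : Matrix m n R) {V V' : Matrix n n R}
    (hV : V * V' = 1) : LinearMap.range (A * V).mulVecLin = LinearMap.range A.mulVecLin := by
  have hsurj : Function.Surjective V.mulVecLin :=
    mulVec_surjective_iff_exists_right_inverse.mpr ⟨V', hV⟩
  rw [mulVecLin_mul, LinearMap.range_comp, LinearMap.range_eq_top.mpr hsurj, Submodule.map_top]

noncomputable def quotRangeEquivOfMulEq [Fintype m] [DecidableEq m] (A : Matrix m n R)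
    {D : Matrix m n R} {U U' : Matrix m m R} {V V' : Matrix n n R}
    (hU : U * U' = 1) (hV : V * V' = 1) (hD : U * A * V = D) :
    ((m → R) ⧸ LinearMap.range A.mulVecLin) ≃ₗ[R] (m → R) ⧸ LinearMap.range D.mulVecLin :=
  Submodule.Quotient.equiv _ _ (U.toLinearEquiv' (invertibleOfRightInverse U U' hU)) <| by
    rw [← hD, range_mulVecLin_mul_of_mul_eq_one _ hV, mulVecLin_mul, LinearMap.range_comp]
    rfl

end SmithNormalForm

section RectDiagonal

def rectDiagonal (n m : ℕ) (d : Fin n → ℕ) : Matrix (Fin n) (Fin m) ℤ :=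
  Matrix.of fun i j => if (j : ℕ) = i then (d i : ℤ) else 0

variable {n m : ℕ} (d : Fin n → ℕ)

lemma rectDiagonal_mulVec (h : n ≤ m) (y : Fin m → ℤ) (i : Fin n) :
    (rectDiagonal n m d *ᵥ y) i = d i * y (Fin.castLE h i) := by
  rw [mulVec, dotProduct, Finset.sum_eq_single (Fin.castLE h i)]
  · simp [rectDiagonal]
  · intro j _ hj
    have : (j : ℕ) ≠ i := fun hji => hj (Fin.ext hji)
    simp [rectDiagonal, this]
  · simp

lemma mem_range_rectDiagonal_mulVecLin (h : n ≤ m) {x : Fin n → ℤ} :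
    x ∈ LinearMap.range (rectDiagonal n m d).mulVecLin ↔ ∀ i, (d i : ℤ) ∣ x i := by
  constructor
  · rintro ⟨y, rfl⟩ i
    simp [rectDiagonal_mulVec d h]
  · intro hx
    refine ⟨fun j => if hj : (j : ℕ) < n then x ⟨j, hj⟩ / d ⟨j, hj⟩ else 0, funext fun i => ?_⟩
    simp [rectDiagonal_mulVec d h, Int.mul_ediv_cancel' (hx i)]

noncomputable def quotRangeRectDiagonalEquiv (h : n ≤ m) :
    ((Fin n → ℤ) ⧸ LinearMap.range (rectDiagonal n m d).mulVecLin) ≃ₗ[ℤ] Π i, ZMod (d i) :=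
  let reduce : (Fin n → ℤ) →ₗ[ℤ] Π i, ZMod (d i) :=
    LinearMap.pi fun i => (Int.castAddHom (ZMod (d i))).toIntLinearMap ∘ₗ LinearMap.proj i
  have hker : LinearMap.range (rectDiagonal n m d).mulVecLin = LinearMap.ker reduce := by
    ext x
    simp [mem_range_rectDiagonal_mulVecLin d h, reduce, funext_iff,
      ZMod.intCast_zmod_eq_zero_iff_dvd]
  (Submodule.quotEquivOfEq _ _ hker).trans <| reduce.quotKerEquivOfSurjective fun y =>
    ⟨fun i => (ZMod.intCast_surjective (y i)).choose,
      funext fun i => (ZMod.intCast_surjective (y i)).choose_spec⟩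

end RectDiagonal

section Jacobian

variable {V : Type*} [Fintype V]

abbrev LapJac (L : Matrix V V ℤ) :=
  LinearMap.ker (degHom V) ⧸
    Submodule.comap (LinearMap.ker (degHom V)).subtype (LinearMap.range L.mulVecLin)

lemma degHom_apply (x : V → ℤ) : degHom V x = ∑ v, x v := rfl

lemma degHom_single [DecidableEq V] (v : V) : degHom V (Pi.single v 1) = 1 := by
  simp [degHom_apply]

lemma degHom_mulVec_of_sum_col_eq {W : Type*} [Fintype W] (M : Matrix W V ℤ) {c : ℤ}
    (hcol : ∀ v, ∑ w, M w v = c) (z : V → ℤ) : degHom W (M *ᵥ z) = c * degHom V z := by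
  simp only [degHom_apply, mulVec, dotProduct, Finset.mul_sum]
  rw [Finset.sum_comm]
  exact Finset.sum_congr rfl fun v _ => by rw [← Finset.sum_mul, hcol]

lemma sum_gogLap_col {E : Type*} [Fintype E] [DecidableEq V] (s t : E → V) (cV : V → ℕ)
    (cE : E → ℕ) (v : V) : ∑ u, gogLap s t cV cE u v = 0 := by
  simp only [gogLap, of_apply]
  rw [Finset.sum_comm]
  refine Finset.sum_eq_zero fun e _ => ?_
  simp only [← Finset.mul_sum, Finset.sum_sub_distrib, Finset.sum_ite_eq, Finset.mem_univ,
    if_true, sub_self, mul_zero]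

end Jacobian

section Augment

variable {n : ℕ} (L : Matrix (Fin (n + 1)) (Fin (n + 1)) ℤ)

def augment : Matrix (Fin (n + 1)) (Fin (n + 2)) ℤ :=
  Matrix.of fun u => Fin.cons ((Pi.single 0 1 : Fin (n + 1) → ℤ) u) (L u)

lemma augment_mulVec (y : Fin (n + 2) → ℤ) :
    augment L *ᵥ y = y 0 • (Pi.single 0 1 : Fin (n + 1) → ℤ) + L *ᵥ Fin.tail y := by
  funext u
  simp only [mulVec, dotProduct, Fin.sum_univ_succ, augment, of_apply, Fin.cons_zero,
    Fin.cons_succ, Fin.tail, Pi.add_apply, Pi.smul_apply, smul_eq_mul]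
  ring

lemma mem_range_augment_iff (hcol : ∀ v, ∑ u, L u v = 0) {x : Fin (n + 1) → ℤ}
    (hx : degHom _ x = 0) :
    x ∈ LinearMap.range (augment L).mulVecLin ↔ x ∈ LinearMap.range L.mulVecLin := by
  constructor
  · rintro ⟨y, rfl⟩
    have hy : y 0 = 0 := by
      rw [mulVecLin_apply, augment_mulVec, map_add, map_smul, degHom_single,
        degHom_mulVec_of_sum_col_eq L hcol] at hx
      simpa using hx
    exact ⟨Fin.tail y, by simp [augment_mulVec, hy]⟩
  · rintro ⟨z, rfl⟩
    exact ⟨Fin.cons 0 z, by simp [augment_mulVec]⟩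

lemma degHom_smul_single_mem_range_augment (x : Fin (n + 1) → ℤ) :
    degHom _ x • (Pi.single 0 1 : Fin (n + 1) → ℤ) ∈ LinearMap.range (augment L).mulVecLin :=
  ⟨Fin.cons (degHom _ x) 0, by simp [augment_mulVec]⟩

noncomputable def lapJacEquivQuotAugment (hcol : ∀ v, ∑ u, L u v = 0) :
    LapJac L ≃ₗ[ℤ] (Fin (n + 1) → ℤ) ⧸ LinearMap.range (augment L).mulVecLin :=
  let N := LinearMap.range (augment L).mulVecLin
  let g := N.mkQ ∘ₗ (LinearMap.ker (degHom (Fin (n + 1)))).subtype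
  have hker : Submodule.comap (LinearMap.ker (degHom _)).subtype (LinearMap.range L.mulVecLin)
      = LinearMap.ker g := by
    ext x
    simp [g, N, Submodule.Quotient.mk_eq_zero, mem_range_augment_iff L hcol x.2]
  have hsurj : Function.Surjective g := by
    intro q
    obtain ⟨x, rfl⟩ := N.mkQ_surjective q
    have hdeg : degHom _ (x - degHom _ x • Pi.single 0 1) = 0 := by
      rw [map_sub, map_smul, degHom_single, smul_eq_mul, mul_one, sub_self]
    refine ⟨⟨_, hdeg⟩, (Submodule.Quotient.eq N).mpr ?_⟩
    simpa using N.neg_mem (degHom_smul_single_mem_range_augment L x)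
  (Submodule.quotEquivOfEq _ _ hker).trans (g.quotKerEquivOfSurjective hsurj)

noncomputable def lapJacEquivPiZMod (hcol : ∀ v, ∑ u, L u v = 0) {d : Fin (n + 1) → ℕ}
    {U U' : Matrix (Fin (n + 1)) (Fin (n + 1)) ℤ} {V V' : Matrix (Fin (n + 2)) (Fin (n + 2)) ℤ}
    (hU : U * U' = 1) (hV : V * V' = 1) (hD : U * augment L * V = rectDiagonal _ _ d) :
    LapJac L ≃ₗ[ℤ] Π i, ZMod (d i) :=
  (lapJacEquivQuotAugment L hcol).trans <|
    (quotRangeEquivOfMulEq _ hU hV hD).trans (quotRangeRectDiagonalEquiv d (by omega))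

end Augment

section Pushforward

variable {V W : Type*} [DecidableEq W]

def pushMatrix (p : V → W) : Matrix W V ℤ :=
  Matrix.of fun w v => if p v = w then 1 else 0

lemma pushV_eq_mulVec [Fintype V] (p : V → W) (d : V → ℤ) : pushV p d = pushMatrix p *ᵥ d := by
  funext w
  simp [pushV, pushMatrix, mulVec, dotProduct, Finset.sum_filter]

lemma sum_pushMatrix_col [Fintype W] (p : V → W) (v : V) : ∑ w, pushMatrix p w v = 1 := by
  simp [pushMatrix]

lemma pushMatrix_mul_pushMatrix_of_rightInverse [Fintype V] [DecidableEq V] {p : V → W}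
    {σ : W → V} (hσ : Function.RightInverse σ p) : pushMatrix p * pushMatrix σ = 1 := by
  ext w w'
  simp [pushMatrix, mul_apply, hσ w', one_apply, eq_comm]

variable [Fintype V] [Fintype W] {L : Matrix V V ℤ} {L' : Matrix W W ℤ} {M : Matrix W V ℤ}

noncomputable def lapJacPush (p : V → W) (h : pushMatrix p * L = L' * M) :
    LapJac L →ₗ[ℤ] LapJac L' :=
  Submodule.mapQ _ _
    ((pushMatrix p).mulVecLin.restrict fun x (hx : degHom V x = 0) => show degHom W _ = 0 by
      rw [mulVecLin_apply, degHom_mulVec_of_sum_col_eq _ (sum_pushMatrix_col p), hx, mul_zero])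
    (by
      rintro x ⟨z, hz⟩
      exact ⟨M *ᵥ z, by
        rw [mulVecLin_apply, mulVec_mulVec, ← h, ← mulVec_mulVec]
        exact congrArg (pushMatrix p *ᵥ ·) hz⟩)

lemma lapJacPush_mk (p : V → W) (h : pushMatrix p * L = L' * M) (x : LinearMap.ker (degHom V))
    (y : LinearMap.ker (degHom W)) (hxy : pushV p x = y) :
    lapJacPush p h (Submodule.Quotient.mk x) = Submodule.Quotient.mk y := by
  rw [lapJacPush, Submodule.mapQ_apply]
  congr 1
  exact Subtype.ext (by rw [← hxy, pushV_eq_mulVec]; rfl)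

lemma lapJacPush_surjective {p : V → W} (hp : Function.Surjective p)
    (h : pushMatrix p * L = L' * M) :
    Function.Surjective (lapJacPush p h) := by
  classical
  intro q
  obtain ⟨y, rfl⟩ := Submodule.Quotient.mk_surjective _ q
  have hpσ := pushMatrix_mul_pushMatrix_of_rightInverse (Function.rightInverse_surjInv hp)
  have hdeg : degHom V (pushMatrix (Function.surjInv hp) *ᵥ y) = 0 := by
    rw [degHom_mulVec_of_sum_col_eq _ (sum_pushMatrix_col _), y.2, mul_zero]
  exact ⟨Submodule.Quotient.mk ⟨_, hdeg⟩, lapJacPush_mk p h _ y <| by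
    rw [pushV_eq_mulVec, mulVec_mulVec, hpσ, one_mulVec]⟩

end Pushforward

lemma AddMonoidHom.natCard_ker_mul_natCard_of_surjective {G H : Type*} [AddGroup G]
    [AddGroup H] (f : G →+ H) (hf : Function.Surjective f) :
    Nat.card f.ker * Nat.card H = Nat.card G := by
  rw [← AddSubgroup.card_mul_index f.ker, AddSubgroup.index_ker,
    AddMonoidHom.range_eq_top_of_surjective f hf, AddSubgroup.card_top]

lemma natCard_pi_zmod {ι : Type*} [Fintype ι] (d : ι → ℕ) :
    Nat.card (Π i, ZMod (d i)) = ∏ i, d i := by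
  simp [Nat.card_pi]

def piZModConsOneEquiv {n : ℕ} (d : Fin n → ℕ) :
    (Π i, ZMod (vecCons 1 d i)) ≃ₗ[ℤ] Π i, ZMod (d i) :=
  haveI : Unique (ZMod (vecCons 1 d 0)) := inferInstanceAs (Unique (ZMod 1))
  (Fin.consLinearEquiv ℤ fun i => ZMod (vecCons 1 d i)).symm ≪≫ₗ
    (LinearEquiv.uniqueProd : (ZMod (vecCons 1 d 0) × Π i, ZMod (d i)) ≃ₗ[ℤ] _)

namespace Petersen

def src : Fin 15 → Fin 10 := ![0, 0, 0, 1, 1, 1, 2, 2, 2, 3, 3, 3, 4, 5, 6]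
def tgt : Fin 15 → Fin 10 := ![7, 8, 9, 5, 6, 9, 4, 6, 8, 4, 5, 7, 9, 8, 7]

def quotSrc : Fin 9 → Fin 7 := ![0, 0, 0, 4, 4, 4, 5, 5, 6]
def quotTgt : Fin 9 → Fin 7 := ![1, 2, 3, 5, 6, 3, 6, 2, 1]
def quotVertexWeight : Fin 7 → ℕ := ![2, 2, 2, 2, 1, 1, 1]
def quotEdgeWeight : Fin 9 → ℕ := ![2, 2, 2, 1, 1, 1, 1, 1, 1]

def quotMap : Fin 10 → Fin 7 := ![0, 4, 5, 6, 4, 5, 6, 1, 2, 3]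

def lap : Matrix (Fin 10) (Fin 10) ℤ :=
  !![3, 0, 0, 0, 0, 0, 0, -1, -1, -1;
   0, 3, 0, 0, 0, -1, -1, 0, 0, -1;
   0, 0, 3, 0, -1, 0, -1, 0, -1, 0;
   0, 0, 0, 3, -1, -1, 0, -1, 0, 0;
   0, 0, -1, -1, 3, 0, 0, 0, 0, -1;
   0, -1, 0, -1, 0, 3, 0, 0, -1, 0;
   0, -1, -1, 0, 0, 0, 3, -1, 0, 0;
   -1, 0, 0, -1, 0, 0, -1, 3, 0, 0;
   -1, 0, -1, 0, 0, -1, 0, 0, 3, 0;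
   -1, -1, 0, 0, -1, 0, 0, 0, 0, 3]

def quotLap : Matrix (Fin 7) (Fin 7) ℤ :=
  !![3, -1, -1, -1, 0, 0, 0;
   -1, 3, 0, 0, 0, 0, -1;
   -1, 0, 3, 0, 0, -1, 0;
   -1, 0, 0, 3, -1, 0, 0;
   0, 0, 0, -2, 3, -1, -1;
   0, 0, -2, 0, -1, 3, -1;
   0, -2, 0, 0, -1, -1, 3]

lemma gogLap_eq : gogLap src tgt (fun _ => 1) (fun _ => 1) = lap := by decide

lemma gogLap_quot_eq :
    gogLap quotSrc quotTgt quotVertexWeight quotEdgeWeight = quotLap := by decide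

lemma pushMatrix_mul_gogLap :
    pushMatrix quotMap * gogLap src tgt (fun _ => 1) (fun _ => 1) =
      gogLap quotSrc quotTgt quotVertexWeight quotEdgeWeight * pushMatrix quotMap := by
  rw [gogLap_eq, gogLap_quot_eq]
  decide

lemma quotMap_surjective : Function.Surjective quotMap := by decide

-- Smith normal form certificates, found by an external computation and checked by `decide`.
def snfLeft : Matrix (Fin 10) (Fin 10) ℤ :=
  !![1, 0, 0, 0, 0, 0, 0, 0, 0, 0;
   0, -1, 0, 0, 0, 0, 0, 0, 0, 0;
   0, 0, -1, 0, 0, 0, 0, 0, 0, 0;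
   0, 1, 1, -1, 0, 0, 0, 0, 0, 0;
   0, 0, -3, 0, -1, 0, 0, 0, 0, 0;
   0, 3, -21, -3, -8, 0, 0, -1, 0, 0;
   0, 1, -8, -1, -3, 0, 1, 0, 0, 0;
   0, 1, -29, -4, -11, -1, 4, 0, 0, 0;
   0, -1, 3, 0, 1, 0, -3, -1, 1, 0;
   0, -2, -1, -1, -1, 0, -5, -2, 3, -1]

def snfLeftInv : Matrix (Fin 10) (Fin 10) ℤ :=
  !![1, 0, 0, 0, 0, 0, 0, 0, 0, 0;
   0, -1, 0, 0, 0, 0, 0, 0, 0, 0;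
   0, 0, -1, 0, 0, 0, 0, 0, 0, 0;
   0, -1, -1, -1, 0, 0, 0, 0, 0, 0;
   0, 0, 3, 0, -1, 0, 0, 0, 0, 0;
   0, 3, 0, 0, -1, 0, 4, -1, 0, 0;
   0, 0, 0, -1, -3, 0, 1, 0, 0, 0;
   0, 0, 0, 3, 8, -1, 0, 0, 0, 0;
   0, -1, 0, 0, 0, -1, 3, 0, 1, 0;
   0, 0, -1, 0, 0, -1, 4, 0, 3, -1]

def snfRight : Matrix (Fin 11) (Fin 11) ℤ :=
  !![1, 0, 0, 1, 3, -3, 24, -10, 40, -10, 0;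
   0, 0, 0, 0, 0, 1, -9, 4, -12, 3, 1;
   0, 0, 0, 0, 0, 0, 1, -1, 3, -1, 1;
   0, 0, 0, 0, 0, 0, 0, 0, 1, 0, 1;
   0, 0, 0, 0, 1, 0, 0, -1, 0, 0, 1;
   0, 0, 1, 0, 0, 0, 0, 0, 3, -1, 1;
   0, 1, 0, 0, 0, 0, 3, -4, 1, 0, 1;
   0, 0, 0, 0, 0, 0, 0, 0, 0, 0, 1;
   0, 0, 0, 1, 3, 0, -3, 1, -4, 1, 1;
   0, 0, 0, 0, 0, 0, 0, 0, 0, 1, 1;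
   0, 0, 0, 0, 0, 0, 0, 1, 8, -3, 1]

def snfRightInv : Matrix (Fin 11) (Fin 11) ℤ :=
  !![1, 3, 0, 0, 0, 0, 0, 0, -1, -1, -1;
   0, 0, -3, 0, 0, 0, 1, 1, 0, 0, 1;
   0, 0, 0, -3, 0, 1, 0, 1, 0, 1, 0;
   0, 0, 3, 3, -3, 0, 0, -2, 1, -1, -1;
   0, 0, 0, -8, 1, 0, 0, 3, 0, 3, 1;
   0, 1, 9, -55, 0, 0, 0, 19, 0, 21, 5;
   0, 0, 1, -11, 0, 0, 0, 5, 0, 4, 1;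
   0, 0, 0, -8, 0, 0, 0, 4, 0, 3, 1;
   0, 0, 0, 1, 0, 0, 0, -1, 0, 0, 0;
   0, 0, 0, 0, 0, 0, 0, -1, 0, 1, 0;
   0, 0, 0, 0, 0, 0, 0, 1, 0, 0, 0]

def quotSnfLeft : Matrix (Fin 7) (Fin 7) ℤ :=
  !![1, 0, 0, 0, 0, 0, 0;
   0, -1, 0, 0, 0, 0, 0;
   0, 1, -1, 0, 0, 0, 0;
   0, 1, 0, -1, 0, 0, 0;
   0, -2, -1, 3, 1, 0, 0;
   0, 0, 4, -4, -1, 1, 0;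
   0, 4, 0, -4, -1, 0, 1]

def quotSnfLeftInv : Matrix (Fin 7) (Fin 7) ℤ :=
  !![1, 0, 0, 0, 0, 0, 0;
   0, -1, 0, 0, 0, 0, 0;
   0, -1, -1, 0, 0, 0, 0;
   0, -1, 0, -1, 0, 0, 0;
   0, 0, -1, 3, 1, 0, 0;
   0, 0, 3, -1, 1, 1, 0;
   0, 0, -1, -1, 1, 0, 1]

def quotSnfRight : Matrix (Fin 8) (Fin 8) ℤ :=
  !![1, -3, 0, 0, 3, 10, 10, 0;
   0, 1, 0, 0, -1, -3, -3, 1;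
   0, 0, 0, 0, 0, 0, 1, 1;
   0, 0, 0, 0, 0, 1, 0, 1;
   0, 0, 0, 0, 0, 0, 0, 1;
   0, 0, 0, 1, 1, 3, 3, 2;
   0, 0, 1, 0, 1, 6, 3, 2;
   0, 0, 0, 0, 1, 3, 6, 2]

def quotSnfRightInv : Matrix (Fin 8) (Fin 8) ℤ :=
  !![1, 3, -1, -1, -1, 0, 0, 0;
   0, 1, -3, 0, 0, 0, 0, 1;
   0, 0, 3, -3, 0, 0, 1, -1;
   0, 0, 3, 0, -3, 1, 0, -1;
   0, 0, -6, -3, 7, 0, 0, 1;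
   0, 0, 0, 1, -1, 0, 0, 0;
   0, 0, 1, 0, -1, 0, 0, 0;
   0, 0, 0, 0, 1, 0, 0, 0]

lemma snfLeft_mul_inv : snfLeft * snfLeftInv = 1 := by decide
lemma snfRight_mul_inv : snfRight * snfRightInv = 1 := by decide
lemma quotSnfLeft_mul_inv : quotSnfLeft * quotSnfLeftInv = 1 := by decide
lemma quotSnfRight_mul_inv : quotSnfRight * quotSnfRightInv = 1 := by decide

lemma snfLeft_mul_augment_mul_snfRight :
    snfLeft * augment lap * snfRight = rectDiagonal 10 11 ![1, 1, 1, 1, 1, 1, 2, 10, 10, 10] := by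
  decide

lemma quotSnfLeft_mul_augment_mul_quotSnfRight :
    quotSnfLeft * augment quotLap * quotSnfRight = rectDiagonal 7 8 ![1, 1, 1, 1, 1, 10, 10] := by
  decide

noncomputable def jacEquiv :
    gogJac src tgt (fun _ => 1) (fun _ => 1) ≃ₗ[ℤ]
      Π i, ZMod (![1, 1, 1, 1, 1, 1, 2, 10, 10, 10] i) :=
  lapJacEquivPiZMod _ (sum_gogLap_col _ _ _ _) snfLeft_mul_inv snfRight_mul_inv
    (gogLap_eq ▸ snfLeft_mul_augment_mul_snfRight)

noncomputable def quotJacEquiv :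
    gogJac quotSrc quotTgt quotVertexWeight quotEdgeWeight ≃ₗ[ℤ] ZMod 10 × ZMod 10 :=
  (lapJacEquivPiZMod _ (sum_gogLap_col _ _ _ _) quotSnfLeft_mul_inv quotSnfRight_mul_inv
    (gogLap_quot_eq ▸ quotSnfLeft_mul_augment_mul_quotSnfRight)).trans <|
    piZModConsOneEquiv _ ≪≫ₗ piZModConsOneEquiv _ ≪≫ₗ piZModConsOneEquiv _ ≪≫ₗ
      piZModConsOneEquiv _ ≪≫ₗ piZModConsOneEquiv _ ≪≫ₗ LinearEquiv.piFinTwo ℤ _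

lemma natCard_jac : Nat.card (gogJac src tgt (fun _ => 1) (fun _ => 1)) = 2000 := by
  rw [Nat.card_congr jacEquiv.toEquiv, natCard_pi_zmod]
  decide

lemma natCard_quotJac :
    Nat.card (gogJac quotSrc quotTgt quotVertexWeight quotEdgeWeight) = 100 := by
  rw [Nat.card_congr quotJacEquiv.toEquiv, Nat.card_prod, Nat.card_zmod]

noncomputable def jacPush :
    gogJac src tgt (fun _ => 1) (fun _ => 1) →ₗ[ℤ]
      gogJac quotSrc quotTgt quotVertexWeight quotEdgeWeight :=
  lapJacPush quotMap pushMatrix_mul_gogLap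

lemma jacPush_mk (x : LinearMap.ker (degHom (Fin 10))) (y : LinearMap.ker (degHom (Fin 7)))
    (hxy : pushV quotMap x = y) :
    jacPush (Submodule.Quotient.mk x) = Submodule.Quotient.mk y :=
  lapJacPush_mk _ _ x y hxy

lemma natCard_ker_jacPush : Nat.card jacPush.toAddMonoidHom.ker = 20 := by
  have h := jacPush.toAddMonoidHom.natCard_ker_mul_natCard_of_surjective
    (lapJacPush_surjective quotMap_surjective pushMatrix_mul_gogLap)
  rw [natCard_jac, natCard_quotJac] at h
  omega

end Petersen

/-- Vertices of `P` are indexed `0:ab, 1:ac, 2:ad, 3:ae, 4:bc, 5:bd, 6:be, 7:cd, 8:ce, 9:de`;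
those of `P//G` are `0:ab, 1:cd, 2:ce, 3:de` (weight 2) and `4:ac, 5:ad, 6:ae` (weight 1),
with the three edges at `ab` of weight 2. -/
theorem stmt19
    (sP tP : Fin 15 → Fin 10) (cVP : Fin 10 → ℕ) (cEP : Fin 15 → ℕ)
    (hsP : sP = ![0, 0, 0, 1, 1, 1, 2, 2, 2, 3, 3, 3, 4, 5, 6])
    (htP : tP = ![7, 8, 9, 5, 6, 9, 4, 6, 8, 4, 5, 7, 9, 8, 7])
    (hcVP : cVP = fun _ => 1) (hcEP : cEP = fun _ => 1)
    (sQ tQ : Fin 9 → Fin 7) (cVQ : Fin 7 → ℕ) (cEQ : Fin 9 → ℕ)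
    (hsQ : sQ = ![0, 0, 0, 4, 4, 4, 5, 5, 6])
    (htQ : tQ = ![1, 2, 3, 5, 6, 3, 6, 2, 1])
    (hcVQ : cVQ = ![2, 2, 2, 2, 1, 1, 1]) (hcEQ : cEQ = ![2, 2, 2, 1, 1, 1, 1, 1, 1])
    (p : Fin 10 → Fin 7) (hp : p = ![0, 4, 5, 6, 4, 5, 6, 1, 2, 3]) :
    Nat.card (gogJac sP tP cVP cEP) = 2000 ∧
    Nonempty (gogJac sQ tQ cVQ cEQ ≃+ ZMod 10 × ZMod 10) ∧
    Nat.card (gogJac sQ tQ cVQ cEQ) = 100 ∧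
    ∃ φ : gogJac sP tP cVP cEP →+ gogJac sQ tQ cVQ cEQ,
      (∀ (x : LinearMap.ker (degHom (Fin 10))) (y : LinearMap.ker (degHom (Fin 7))),
        pushV p (x : Fin 10 → ℤ) = (y : Fin 7 → ℤ) →
          φ (Submodule.Quotient.mk x) = Submodule.Quotient.mk y) ∧
      Nat.card φ.ker = 20 := by
  subst hsP htP hcVP hcEP hsQ htQ hcVQ hcEQ hp
  exact ⟨Petersen.natCard_jac, ⟨Petersen.quotJacEquiv.toAddEquiv⟩, Petersen.natCard_quotJac,
    Petersen.jacPush.toAddMonoidHom, Petersen.jacPush_mk, Petersen.natCard_ker_jacPush⟩
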